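/- arXiv:1702.01390 — 3 statements merged into one kernel-verified Lean document; each statement's English description precedes it below -/
import Mathlib

section
/- Let H be a graph and r ≥ 2 an integer. The compatibility graph C_{Hom_p(K_r, H)} (whose vertices are r-tuples (A_1,...,A_r) of non-empty pairwise complete-bipartite-connected subsets of V(H), with the natural Z_r cyclic-shift action, and where two vertices are adjacent if some nonidentity shift of one is comparable to the other under coordinatewise inclusion) contains no clique of size r+1; i.e., it is K_{r+1}-free. -/
/-- Membership in the Hom poset `Hom_p(K_r, H)`: an `r`-tuple (indexed by `ZMod r`)
of non-empty subsets of `V(H)` such that distinct coordinates are completely joined. -/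
def HomPosetMem {V : Type*} (H : SimpleGraph V) (r : ℕ) (A : ZMod r → Set V) : Prop :=
  (∀ i, (A i).Nonempty) ∧ ∀ i j : ZMod r, i ≠ j → ∀ a ∈ A i, ∀ b ∈ A j, H.Adj a b

/-- The Hom poset `Hom_p(K_r, H)`. -/
def HomPoset {V : Type*} (H : SimpleGraph V) (r : ℕ) : Type _ :=
  {A : ZMod r → Set V // HomPosetMem H r A}

instance {V : Type*} (H : SimpleGraph V) (r : ℕ) : PartialOrder (HomPoset H r) :=
  PartialOrder.lift Subtype.val Subtype.val_injective

/-- The cyclic-shift action of `ZMod r` on `Hom_p(K_r, H)`. -/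
def homShift {V : Type*} (H : SimpleGraph V) {r : ℕ} (g : ZMod r) (A : HomPoset H r) :
    HomPoset H r :=
  ⟨fun i => A.1 (i + g),
    ⟨fun i => A.2.1 (i + g),
     fun i j hij a ha b hb => A.2.2 (i + g) (j + g) (fun h => hij (by
       have := add_right_cancel h; exact this)) a ha b hb⟩⟩

/-- The compatibility graph of `Hom_p(K_r, H)` with the cyclic shift `ZMod r`-action:
two distinct tuples are adjacent iff one is comparable to a nontrivial shift of the other. -/
def compatGraph {V : Type*} (H : SimpleGraph V) (r : ℕ) : SimpleGraph (HomPoset H r) where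
  Adj x y := x ≠ y ∧ ∃ g : ZMod r, g ≠ 0 ∧
      (x ≤ homShift H g y ∨ homShift H g y ≤ x ∨ y ≤ homShift H g x ∨ homShift H g x ≤ y)
  symm := ⟨by
    rintro x y ⟨hne, g, hg, hc⟩
    exact ⟨hne.symm, g, hg, by tauto⟩⟩
  loopless := ⟨by rintro x ⟨hne, _⟩; exact hne rfl⟩

/-- The Kneser graph `KG(n,k)`. -/
def KneserGraph (n k : ℕ) : SimpleGraph {S : Finset (Fin n) // S.card = k} where
  Adj S T := S ≠ T ∧ Disjoint S.1 T.1
  symm := ⟨fun S T ⟨h, d⟩ => ⟨h.symm, d.symm⟩⟩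
  loopless := ⟨fun S ⟨h, _⟩ => h rfl⟩

/-!
Choose a member `m` of a clique of minimal total size `∑ i, |m i|`. Since a shift preserves total
size, comparability of `m` with a shift of another member `y` forces `m ≤ ω^g y` for some `g`, and
this `g` is unique because the coordinates of `y` are non-empty and pairwise disjoint. Two of
`r + 1` members share the same `g`; if they are adjacent via `y ≤ ω^h z`, then `m ≤ ω^(g+h) z`,
so `h = 0`, a contradiction.
-/

namespace HomPoset

variable {V : Type*} {H : SimpleGraph V} {r : ℕ}

@[simp]
lemma homShift_val (g : ZMod r) (x : HomPoset H r) (i : ZMod r) :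
    (homShift H g x).1 i = x.1 (i + g) := rfl

@[simp]
lemma homShift_zero (x : HomPoset H r) : homShift H 0 x = x :=
  Subtype.ext <| funext fun i => by simp

lemma homShift_homShift (g h : ZMod r) (x : HomPoset H r) :
    homShift H g (homShift H h x) = homShift H (g + h) x :=
  Subtype.ext <| funext fun i => by simp [add_assoc]

lemma homShift_mono (g : ZMod r) : Monotone (homShift H g) :=
  fun _ _ hxy i => hxy (i + g)

lemma homShift_le_iff {g : ZMod r} {x y : HomPoset H r} :
    homShift H g x ≤ y ↔ x ≤ homShift H (-g) y := by
  constructor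
  · intro h
    simpa [homShift_homShift] using homShift_mono (-g) h
  · intro h
    simpa [homShift_homShift] using homShift_mono g h

lemma eq_of_mem_of_mem (x : HomPoset H r) {a : V} {i j : ZMod r}
    (hi : a ∈ x.1 i) (hj : a ∈ x.1 j) : i = j := by
  by_contra hij
  exact H.loopless.irrefl a (x.2.2 i j hij a hi a hj)

lemma eq_of_le_homShift_of_le_homShift {x y : HomPoset H r} {g h : ZMod r}
    (hg : x ≤ homShift H g y) (hh : x ≤ homShift H h y) : g = h := by
  obtain ⟨a, ha⟩ := x.2.1 0
  simpa using y.eq_of_mem_of_mem (hg 0 ha) (hh 0 ha)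

lemma exists_le_homShift_of_adj {x y : HomPoset H r} (hxy : (compatGraph H r).Adj x y) :
    ∃ g ≠ 0, x ≤ homShift H g y ∨ y ≤ homShift H g x := by
  obtain ⟨-, g, hg, h | h | h | h⟩ := hxy
  · exact ⟨g, hg, .inl h⟩
  · exact ⟨-g, neg_ne_zero.mpr hg, .inr (homShift_le_iff.mp h)⟩
  · exact ⟨g, hg, .inr h⟩
  · exact ⟨-g, neg_ne_zero.mpr hg, .inl (homShift_le_iff.mp h)⟩

lemma eq_zero_of_le_homShift {m y z : HomPoset H r} {g h : ZMod r}
    (hy : m ≤ homShift H g y) (hz : m ≤ homShift H g z) (hyz : y ≤ homShift H h z) : h = 0 := by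
  have hm : m ≤ homShift H (g + h) z := by
    simpa [homShift_homShift] using hy.trans (homShift_mono g hyz)
  simpa using eq_of_le_homShift_of_le_homShift hm hz

lemma not_adj_of_le_homShift_of_le_homShift {m y z : HomPoset H r} {g : ZMod r}
    (hy : m ≤ homShift H g y) (hz : m ≤ homShift H g z) : ¬(compatGraph H r).Adj y z := by
  intro hadj
  obtain ⟨h, hh, hyz | hzy⟩ := exists_le_homShift_of_adj hadj
  · exact hh (eq_zero_of_le_homShift hy hz hyz)
  · exact hh (eq_zero_of_le_homShift hz hy hzy)

variable [NeZero r]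

noncomputable def size (x : HomPoset H r) : ℕ := ∑ i, (x.1 i).ncard

lemma size_homShift (g : ZMod r) (x : HomPoset H r) : (homShift H g x).size = x.size :=
  Equiv.sum_comp (Equiv.addRight g) fun i => (x.1 i).ncard

lemma eq_of_le_of_size_le [Finite V] {x y : HomPoset H r} (hxy : x ≤ y)
    (hsize : y.size ≤ x.size) : x = y := by
  have hle : ∀ i ∈ Finset.univ, (x.1 i).ncard ≤ (y.1 i).ncard :=
    fun i _ => Set.ncard_le_ncard (hxy i)
  have hcard := (Finset.sum_eq_sum_iff_of_le hle).mp
    (le_antisymm (Finset.sum_le_sum hle) hsize)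
  exact Subtype.ext <| funext fun i =>
    Set.eq_of_subset_of_ncard_le (hxy i) (hcard i (Finset.mem_univ i)).ge

lemma exists_le_homShift_of_adj_of_size_le [Finite V] {x y : HomPoset H r}
    (hxy : (compatGraph H r).Adj x y) (hsize : x.size ≤ y.size) :
    ∃ g ≠ 0, x ≤ homShift H g y := by
  obtain ⟨g, hg, h | h⟩ := exists_le_homShift_of_adj hxy
  · exact ⟨g, hg, h⟩
  · have hy : y = homShift H g x := eq_of_le_of_size_le h (by rwa [size_homShift])
    exact ⟨-g, neg_ne_zero.mpr hg, homShift_le_iff.mp hy.ge⟩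

end HomPoset

/-- For every graph `H` and `r ≥ 2`, the compatibility graph of `Hom_p(K_r, H)`
is `K_{r+1}`-free. -/
theorem compatGraph_cliqueFree {V : Type*} [Fintype V] (H : SimpleGraph V) (r : ℕ)
    (hr : 2 ≤ r) : (compatGraph H r).CliqueFree (r + 1) := by
  have : NeZero r := ⟨by omega⟩
  rintro t ⟨ht, hcard⟩
  obtain ⟨m, hm, hmin⟩ := t.exists_min_image HomPoset.size (Finset.card_pos.mp (by omega))
  have hoffset : ∀ y : t, ∃ g, m ≤ homShift H g y := by
    rintro ⟨y, hy⟩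
    by_cases hmy : m = y
    · exact ⟨0, by rw [HomPoset.homShift_zero, hmy]⟩
    · obtain ⟨g, -, hg⟩ :=
        HomPoset.exists_le_homShift_of_adj_of_size_le (ht hm hy hmy) (hmin y hy)
      exact ⟨g, hg⟩
  choose σ hσ using hoffset
  obtain ⟨y, z, hyz, hσyz⟩ := Fintype.exists_ne_map_eq_of_card_lt σ (by simp [hcard])
  exact HomPoset.not_adj_of_le_homShift_of_le_homShift (hσ y) (hσyz ▸ hσ z)
    (ht y.2 z.2 (Subtype.coe_ne_coe.mpr hyz))
end

section
/- For any graph H and any r ≥ 2, there is a graph homomorphism from C_{Hom_p(K_r, H)} to H; consequently χ(C_{Hom_p(K_r, H)}) ≤ χ(H). -/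
/-! Every tuple of `Hom_p(K_r, H)` is sent to a point of its `i`-th coordinate. If `x` lies
below the shift of `y` by `g ≠ 0`, then `x i ⊆ y (i + g)`, a coordinate of `y` other than `y i`,
so it is completely joined to `y i`; the other three comparabilities defining the compatibility
graph reduce to this one by symmetry and by shifting with `-g`. -/

namespace compatGraph

variable {V : Type*} {H : SimpleGraph V} {r : ℕ}

theorem le_homShift_neg_of_homShift_le {x y : HomPoset H r} {g : ZMod r}
    (h : homShift H g y ≤ x) : y ≤ homShift H (-g) x := fun i => by
  simpa [homShift] using h (i + -g)

theorem adj_of_le_homShift {x y : HomPoset H r} {g : ZMod r} (hg : g ≠ 0)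
    (h : x ≤ homShift H g y) {i : ZMod r} {a b : V} (ha : a ∈ x.1 i) (hb : b ∈ y.1 i) :
    H.Adj a b :=
  y.2.2 (i + g) i (by simpa using hg) a (h i ha) b hb

theorem adj_of_adj {x y : HomPoset H r} (hxy : (compatGraph H r).Adj x y) {i : ZMod r}
    {a b : V} (ha : a ∈ x.1 i) (hb : b ∈ y.1 i) : H.Adj a b := by
  obtain ⟨-, g, hg, h | h | h | h⟩ := hxy
  · exact adj_of_le_homShift hg h ha hb
  · exact (adj_of_le_homShift (neg_ne_zero.2 hg) (le_homShift_neg_of_homShift_le h) hb ha).symm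
  · exact (adj_of_le_homShift hg h hb ha).symm
  · exact adj_of_le_homShift (neg_ne_zero.2 hg) (le_homShift_neg_of_homShift_le h) ha hb

noncomputable def homAt (i : ZMod r) : compatGraph H r →g H where
  toFun A := (A.2.1 i).some
  map_rel' hxy := adj_of_adj hxy (Set.Nonempty.some_mem _) (Set.Nonempty.some_mem _)

end compatGraph

theorem compatGraph_hom_to_base_general {V : Type*}
    (H : SimpleGraph V) (r : ℕ) :
    Nonempty ((compatGraph H r) →g H) ∧
      (compatGraph H r).chromaticNumber ≤ H.chromaticNumber :=
  ⟨⟨compatGraph.homAt 0⟩, SimpleGraph.chromaticNumber_mono_of_hom (compatGraph.homAt 0)⟩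

/-- There is a graph homomorphism from the compatibility graph `C_{Hom_p(K_r,H)}` to `H`;
consequently its chromatic number is at most that of `H`. -/
theorem compatGraph_hom_to_base {V : Type*} [Fintype V] [LinearOrder V]
    (H : SimpleGraph V) (r : ℕ) (hr : 2 ≤ r) :
    Nonempty ((compatGraph H r) →g H) ∧
      (compatGraph H r).chromaticNumber ≤ H.chromaticNumber :=
  compatGraph_hom_to_base_general H r
end

section
/- Define λ on X ∈ (Z_r ∪ {0})^n \ {0} with X_i = {s : x_s = ω^i}: if all |X_i| ≤ k-1, λ(X) = (ω^t, Σ_i |X_i|) where ω^t is the first nonzero entry of X; if some |X_i| ≥ k and some |X_j| ≤ k-1, λ(X) = (ω^t, r(k-1) + #{i : |X_i| ≥ k}) where ω^t is the first nonzero entry of X with |X_t| ≥ k. Then λ is Z_r-equivariant on its domain of definition: λ(ω^m.X) = ω^m.λ(X) for all m, where ω^m acts on the codomain Z_r × ℕ by multiplication in the first factor. -/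
/-
The action permutes the classes: the class `i` of `ω^m.X` is the class `i - m` of `X`. Hence
the case distinction, the total size of the classes and the number of classes of size `≥ k`
are invariant, while the first (large) nonzero entry of `ω^m.X` sits at the same index as that
of `X`, with its value shifted by `m`.
-/

/-- The domain `(Z_r ∪ {0})^n \ {(0,...,0)}`, with `Z_r` written additively as `ZMod r`
and `0` modelled by `none`. -/
def TuckerDom (r n : ℕ) : Type :=
  {X : Fin n → Option (ZMod r) // ∃ s, X s ≠ none}

/-- The coordinatewise `ZMod r`-action on the Tucker domain (fixing `0 = none`). -/
def tuckerAct {r n : ℕ} (g : ZMod r) (X : TuckerDom r n) : TuckerDom r n :=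
  ⟨fun s => (X.1 s).map (g + ·), by
    obtain ⟨s, hs⟩ := X.2
    exact ⟨s, by simpa [Option.map_eq_none_iff] using hs⟩⟩

/-- The order on the Tucker domain: `X ≤ Y` iff `x_s = y_s` whenever `x_s ≠ 0`. -/
def TuckerLE {r n : ℕ} (X Y : TuckerDom r n) : Prop :=
  ∀ s, X.1 s ≠ none → X.1 s = Y.1 s

/-- The class `X_i = {s : x_s = ω^i}` of a sign vector. -/
def clsF {r n : ℕ} (X : Fin n → Option (ZMod r)) (i : ZMod r) : Finset (Fin n) :=
  Finset.univ.filter (fun s => X s = some i)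

/-- `binomV k X i` is the family of all `k`-subsets of the class `X_i`,
viewed as a set of vertices of the Kneser graph `KG(n,k)`. -/
def binomV {r n : ℕ} (k : ℕ) (X : Fin n → Option (ZMod r)) (i : ZMod r) :
    Set {S : Finset (Fin n) // S.card = k} :=
  {S | S.1 ⊆ clsF X i}

lemma eq_of_least_index_some {ι α : Type*} [LinearOrder ι] {X : ι → Option α}
    {p : α → Prop} {s₁ s₂ : ι} {t₁ t₂ : α}
    (h₁ : X s₁ = some t₁) (hp₁ : p t₁)
    (hmin₁ : ∀ s < s₁, ∀ t, X s = some t → ¬ p t)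
    (h₂ : X s₂ = some t₂) (hp₂ : p t₂)
    (hmin₂ : ∀ s < s₂, ∀ t, X s = some t → ¬ p t) :
    t₁ = t₂ := by
  rcases lt_trichotomy s₁ s₂ with h | rfl | h
  · exact absurd hp₁ (hmin₂ s₁ h t₁ h₁)
  · exact Option.some_injective _ (h₁.symm.trans h₂)
  · exact absurd hp₂ (hmin₁ s₂ h t₂ h₂)

section TuckerAct

variable {r n : ℕ} (m : ZMod r) (X : TuckerDom r n)

lemma tuckerAct_apply_eq_some_iff (s : Fin n) (t : ZMod r) :
    (tuckerAct m X).1 s = some t ↔ X.1 s = some (t - m) := by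
  simp only [tuckerAct]
  cases X.1 s <;> simp [eq_sub_iff_add_eq']

lemma tuckerAct_apply_eq_none_iff (s : Fin n) :
    (tuckerAct m X).1 s = none ↔ X.1 s = none :=
  Option.map_eq_none_iff

lemma clsF_tuckerAct (i : ZMod r) : clsF (tuckerAct m X).1 i = clsF X.1 (i - m) := by
  ext s
  simp only [clsF, Finset.mem_filter, Finset.mem_univ, true_and, tuckerAct_apply_eq_some_iff]

lemma sum_clsF_tuckerAct [NeZero r] {M : Type*} [AddCommMonoid M] (f : Finset (Fin n) → M) :
    ∑ i, f (clsF (tuckerAct m X).1 i) = ∑ i, f (clsF X.1 i) := by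
  simp only [clsF_tuckerAct]
  exact Equiv.sum_comp (Equiv.subRight m) (fun i => f (clsF X.1 i))

end TuckerAct

section Label

variable {n k r : ℕ} [NeZero r] (lam : TuckerDom r n → ZMod r × ℕ) (m : ZMod r)
  (X : TuckerDom r n)

lemma lam_tuckerAct_of_forall_card_le
    (h1 : ∀ X : TuckerDom r n, (∀ i, (clsF X.1 i).card ≤ k - 1) →
      ∃ (s : Fin n) (t : ZMod r), X.1 s = some t ∧ (∀ s' < s, X.1 s' = none) ∧
        lam X = (t, ∑ i : ZMod r, (clsF X.1 i).card))
    (hsmall : ∀ i, (clsF X.1 i).card ≤ k - 1) :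
    lam (tuckerAct m X) = (m + (lam X).1, (lam X).2) := by
  obtain ⟨s, t, hst, hmin, hlam⟩ := h1 X hsmall
  obtain ⟨s', t', hst', hmin', hlam'⟩ := h1 (tuckerAct m X) fun i => by
    simpa only [clsF_tuckerAct] using hsmall (i - m)
  have hmst : (tuckerAct m X).1 s = some (m + t) := by
    rwa [tuckerAct_apply_eq_some_iff, add_sub_cancel_left]
  have ht' : m + t = t' := eq_of_least_index_some (p := fun _ => True)
    hmst trivial
    (fun u hu _ h => by simp [(tuckerAct_apply_eq_none_iff m X u).2 (hmin u hu)] at h)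
    hst' trivial (fun u hu _ h => by simp [hmin' u hu] at h)
  rw [hlam', hlam, ← ht', sum_clsF_tuckerAct m X Finset.card]

lemma lam_tuckerAct_of_exists_le_card
    (h2 : ∀ X : TuckerDom r n,
      (∃ i, k ≤ (clsF X.1 i).card) → (∃ j, (clsF X.1 j).card ≤ k - 1) →
      ∃ (s : Fin n) (t : ZMod r), X.1 s = some t ∧ k ≤ (clsF X.1 t).card ∧
        (∀ s' < s, ∀ t', X.1 s' = some t' → (clsF X.1 t').card < k) ∧
        lam X = (t, r * (k - 1) +
          (Finset.univ.filter (fun i : ZMod r => k ≤ (clsF X.1 i).card)).card))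
    (hlarge : ∃ i, k ≤ (clsF X.1 i).card) (hsmall : ∃ j, (clsF X.1 j).card ≤ k - 1) :
    lam (tuckerAct m X) = (m + (lam X).1, (lam X).2) := by
  have translate {p : ℕ → Prop} : (∃ i, p (clsF X.1 i).card) →
      ∃ i, p (clsF (tuckerAct m X).1 i).card := fun ⟨i, hi⟩ =>
    ⟨i + m, by rwa [clsF_tuckerAct, add_sub_cancel_right]⟩
  obtain ⟨s, t, hst, hkt, hmin, hlam⟩ := h2 X hlarge hsmall
  obtain ⟨s', t', hst', hkt', hmin', hlam'⟩ := h2 (tuckerAct m X)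
    (translate (p := (k ≤ ·)) hlarge) (translate (p := (· ≤ k - 1)) hsmall)
  have hmst : (tuckerAct m X).1 s = some (m + t) := by
    rwa [tuckerAct_apply_eq_some_iff, add_sub_cancel_left]
  have ht' : m + t = t' := eq_of_least_index_some
    (p := fun u => k ≤ (clsF (tuckerAct m X).1 u).card)
    hmst (by rwa [clsF_tuckerAct, add_sub_cancel_left])
    (fun u hu v h => by
      rw [tuckerAct_apply_eq_some_iff] at h
      simpa only [clsF_tuckerAct, not_le] using hmin u hu _ h)
    hst' hkt' (fun u hu v h => (hmin' u hu v h).not_ge)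
  simp only [Finset.card_filter] at hlam hlam' ⊢
  rw [hlam', hlam, ← ht',
    sum_clsF_tuckerAct m X fun c => if k ≤ c.card then 1 else 0]

end Label

theorem lambda_equivariant_general (n k r : ℕ) [NeZero r]
    (lam : TuckerDom r n → ZMod r × ℕ)
    (h1 : ∀ X : TuckerDom r n, (∀ i, (clsF X.1 i).card ≤ k - 1) →
      ∃ (s : Fin n) (t : ZMod r), X.1 s = some t ∧ (∀ s' < s, X.1 s' = none) ∧
        lam X = (t, ∑ i : ZMod r, (clsF X.1 i).card))
    (h2 : ∀ X : TuckerDom r n,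
      (∃ i, k ≤ (clsF X.1 i).card) → (∃ j, (clsF X.1 j).card ≤ k - 1) →
      ∃ (s : Fin n) (t : ZMod r), X.1 s = some t ∧ k ≤ (clsF X.1 t).card ∧
        (∀ s' < s, ∀ t', X.1 s' = some t' → (clsF X.1 t').card < k) ∧
        lam X = (t, r * (k - 1) +
          (Finset.univ.filter (fun i : ZMod r => k ≤ (clsF X.1 i).card)).card))
    (m : ZMod r) (X : TuckerDom r n) (hdom : ∃ i, (clsF X.1 i).card ≤ k - 1) :
    lam (tuckerAct m X) = (m + (lam X).1, (lam X).2) := by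
  by_cases hsmall : ∀ i, (clsF X.1 i).card ≤ k - 1
  · exact lam_tuckerAct_of_forall_card_le lam m X h1 hsmall
  · obtain ⟨i, hi⟩ := not_forall.1 hsmall
    exact lam_tuckerAct_of_exists_le_card lam m X h2 ⟨i, by omega⟩ hdom

/-- The labelling `λ` of the `Z_r`-Tucker argument (cases: all classes of size `≤ k-1`;
some class of size `≥ k` and some of size `≤ k-1`) is `Z_r`-equivariant on its domain of
definition. -/
theorem lambda_equivariant (n k r : ℕ) [NeZero r] (hr : 2 ≤ r) (hk : 1 ≤ k)
    (lam : TuckerDom r n → ZMod r × ℕ)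
    (h1 : ∀ X : TuckerDom r n, (∀ i, (clsF X.1 i).card ≤ k - 1) →
      ∃ (s : Fin n) (t : ZMod r), X.1 s = some t ∧ (∀ s' < s, X.1 s' = none) ∧
        lam X = (t, ∑ i : ZMod r, (clsF X.1 i).card))
    (h2 : ∀ X : TuckerDom r n,
      (∃ i, k ≤ (clsF X.1 i).card) → (∃ j, (clsF X.1 j).card ≤ k - 1) →
      ∃ (s : Fin n) (t : ZMod r), X.1 s = some t ∧ k ≤ (clsF X.1 t).card ∧
        (∀ s' < s, ∀ t', X.1 s' = some t' → (clsF X.1 t').card < k) ∧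
        lam X = (t, r * (k - 1) +
          (Finset.univ.filter (fun i : ZMod r => k ≤ (clsF X.1 i).card)).card))
    (m : ZMod r) (X : TuckerDom r n) (hdom : ∃ i, (clsF X.1 i).card ≤ k - 1) :
    lam (tuckerAct m X) = (m + (lam X).1, (lam X).2) :=
  lambda_equivariant_general n k r lam h1 h2 m X hdom
end
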